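/- arXiv:0807.0988 — 2 statements merged into one kernel-verified Lean document; each statement's English description precedes it below -/
import Mathlib

section
/- The partial Cayley transform R: B → H, given explicitly in coordinates by the linear fractional action of the matrix R = [[1/√2, 0, 1/√2],[0, I_{n-1}, 0],[-1/√2, 0, 1/√2]], maps the unit ball B = {z ∈ C^n : z*z < 1} biholomorphically onto H = {w ∈ C^n : Re w_1 > (1/2) w_2* w_2}, and satisfies Δ'(Rz, Rw) = Δ(z,w) · j(R^{-1}, Rz)^{-1} · conj(j(R^{-1}, Rw))^{-1} with j(R^{-1}, w) = √2/(1 + w_1). -/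
open Complex BigOperators

noncomputable section

/-- The unit ball `B` in `ℂ × ℂ^{n-1} ≅ ℂⁿ`. -/
def ballB (m : ℕ) : Set (ℂ × (Fin m → ℂ)) :=
  {z | ‖z.1‖ ^ 2 + ∑ i, ‖z.2 i‖ ^ 2 < 1}

/-- The unbounded (Siegel) domain `H = {w : Re w₁ > ½ ‖w₂‖²}`. -/
def SiegelH (m : ℕ) : Set (ℂ × (Fin m → ℂ)) :=
  {w | (1 / 2 : ℝ) * ∑ i, ‖w.2 i‖ ^ 2 < w.1.re}

/-- The Jordan triple determinant `Δ(z,w) = 1 - w*z`. -/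
def JTD {m : ℕ} (z w : ℂ × (Fin m → ℂ)) : ℂ :=
  1 - ((starRingEnd ℂ) w.1 * z.1 + ∑ i, (starRingEnd ℂ) (w.2 i) * z.2 i)

/-- The sesqui-polynomial `Δ'(z,w) = z₁ + conj w₁ - w₂* z₂` on `H`. -/
def DeltaP {m : ℕ} (z w : ℂ × (Fin m → ℂ)) : ℂ :=
  z.1 + (starRingEnd ℂ) w.1 - ∑ i, (starRingEnd ℂ) (w.2 i) * z.2 i

/-- The partial Cayley transform, i.e. the fractional linear action of the matrix
`R = [[1/√2, 0, 1/√2], [0, I, 0], [-1/√2, 0, 1/√2]]`: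
`z ↦ ((1+z₁)/(1-z₁), √2 z₂/(1-z₁))`. -/
def cayley {m : ℕ} (z : ℂ × (Fin m → ℂ)) : ℂ × (Fin m → ℂ) :=
  ((1 + z.1) / (1 - z.1), fun i => (Real.sqrt 2 : ℂ) * z.2 i / (1 - z.1))

/-- The inverse Cayley transform `w ↦ ((w₁-1)/(w₁+1), √2 w₂/(w₁+1))`. -/
def cayleyInv {m : ℕ} (w : ℂ × (Fin m → ℂ)) : ℂ × (Fin m → ℂ) :=
  ((w.1 - 1) / (w.1 + 1), fun i => (Real.sqrt 2 : ℂ) * w.2 i / (w.1 + 1))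

/-- The cocycle `j(R⁻¹, w) = √2/(1 + w₁)`. -/
def jRinv {m : ℕ} (w : ℂ × (Fin m → ℂ)) : ℂ := (Real.sqrt 2 : ℂ) / (1 + w.1)

lemma norm_aux (r : ℝ) (a d : ℂ) : ‖(r:ℂ)*a/d‖^2 = r^2*‖a‖^2/Complex.normSq d := by
  rw [norm_div, norm_mul, div_pow, mul_pow, ← Complex.sq_norm]
  simp [Real.norm_eq_abs, _root_.sq_abs]

lemma hsq2 : (Real.sqrt 2:ℂ) * (Real.sqrt 2:ℂ) = 2 := by
  norm_cast
  rw [Real.mul_self_sqrt] <;> norm_num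

lemma ball_ne {m : ℕ} {z : ℂ × (Fin m → ℂ)} (hz : z ∈ ballB m) : (1:ℂ) - z.1 ≠ 0 := by
  have hS : (0:ℝ) ≤ ∑ i, ‖z.2 i‖^2 := by positivity
  have h : ‖z.1‖^2 < 1 := by
    have := hz; simp only [ballB, Set.mem_setOf_eq] at this; linarith
  intro h0
  have hz1 : z.1 = 1 := by linear_combination -h0
  simp [hz1] at h

lemma siegel_ne {m : ℕ} {w : ℂ × (Fin m → ℂ)} (hw : w ∈ SiegelH m) : w.1 + 1 ≠ 0 := by
  have hS : (0:ℝ) ≤ ∑ i, ‖w.2 i‖^2 := by positivity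
  have h : 0 < w.1.re := by
    have := hw; simp only [SiegelH, Set.mem_setOf_eq] at this; linarith
  intro h0
  have := congrArg Complex.re h0
  simp at this; linarith

lemma mapsTo_cayley {m : ℕ} : Set.MapsTo (cayley (m:=m)) (ballB m) (SiegelH m) := by
  intro z hz
  have ha : (1:ℂ) - z.1 ≠ 0 := ball_ne hz
  have hD : 0 < Complex.normSq (1 - z.1) := by rwa [Complex.normSq_pos]
  have hz' : z.1.re^2 + z.1.im^2 + ∑ i, ‖z.2 i‖^2 < 1 := by
    have h := hz
    simp only [ballB, Set.mem_setOf_eq] at h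
    have : ‖z.1‖^2 = z.1.re^2 + z.1.im^2 := by
      rw [Complex.sq_norm, Complex.normSq_apply]; ring
    linarith [this ▸ h]
  simp only [SiegelH, cayley, Set.mem_setOf_eq]
  have hsum : ∑ i, ‖(Real.sqrt 2:ℂ) * z.2 i / (1 - z.1)‖^2
      = 2 * (∑ i, ‖z.2 i‖^2) / Complex.normSq (1 - z.1) := by
    simp only [norm_aux, Real.sq_sqrt (by norm_num : (0:ℝ) ≤ 2)]
    rw [← Finset.sum_div, ← Finset.mul_sum]
  have hre : (((1:ℂ) + z.1)/(1 - z.1)).re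
      = (1 - z.1.re^2 - z.1.im^2)/Complex.normSq (1 - z.1) := by
    rw [Complex.div_re, ← add_div]
    congr 1
    simp [Complex.normSq_apply]
    ring
  rw [hsum, hre]
  have : (1/2:ℝ) * (2 * (∑ i, ‖z.2 i‖^2) / Complex.normSq (1 - z.1))
      = (∑ i, ‖z.2 i‖^2) / Complex.normSq (1 - z.1) := by ring
  rw [this, div_lt_div_iff₀ hD hD]
  nlinarith [hz', hD]

lemma mapsTo_cayleyInv {m : ℕ} : Set.MapsTo (cayleyInv (m:=m)) (SiegelH m) (ballB m) := by
  intro w hw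
  have ha : w.1 + 1 ≠ 0 := siegel_ne hw
  have hD : 0 < Complex.normSq (w.1 + 1) := by rwa [Complex.normSq_pos]
  have hw' : (1/2:ℝ) * ∑ i, ‖w.2 i‖^2 < w.1.re := hw
  simp only [ballB, cayleyInv, Set.mem_setOf_eq]
  have hsum : ∑ i, ‖(Real.sqrt 2:ℂ) * w.2 i / (w.1 + 1)‖^2
      = 2 * (∑ i, ‖w.2 i‖^2) / Complex.normSq (w.1 + 1) := by
    simp only [norm_aux, Real.sq_sqrt (by norm_num : (0:ℝ) ≤ 2)]
    rw [← Finset.sum_div, ← Finset.mul_sum]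
  have h1 : ‖(w.1 - 1)/(w.1 + 1)‖^2 = Complex.normSq (w.1 - 1)/Complex.normSq (w.1 + 1) := by
    rw [norm_div, div_pow,
      Complex.sq_norm, Complex.sq_norm]
  rw [hsum, h1, ← add_div, div_lt_one hD]
  simp only [Complex.normSq_apply, Complex.sub_re, Complex.sub_im, Complex.add_re,
    Complex.add_im, Complex.one_re, Complex.one_im]
  nlinarith [hw']

lemma left_inv' {m : ℕ} {z : ℂ × (Fin m → ℂ)} (hz : z ∈ ballB m) :
    cayleyInv (cayley z) = z := by
  have ha : (1:ℂ) - z.1 ≠ 0 := ball_ne hz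
  have hb : (1 + z.1)/(1 - z.1) + 1 ≠ 0 := by
    have h : (1 + z.1)/(1 - z.1) + 1 = 2/(1 - z.1) := by field_simp; ring
    rw [h]
    exact div_ne_zero two_ne_zero ha
  unfold cayley cayleyInv
  refine Prod.ext ?_ (funext fun i => ?_) <;> simp only
  · field_simp
    ring
  · field_simp
    linear_combination (z.2 i) * hsq2

lemma right_inv' {m : ℕ} {w : ℂ × (Fin m → ℂ)} (hw : w ∈ SiegelH m) :
    cayley (cayleyInv w) = w := by
  have ha : w.1 + 1 ≠ 0 := siegel_ne hw
  have hb : (1:ℂ) - (w.1 - 1)/(w.1 + 1) ≠ 0 := by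
    have h : (1:ℂ) - (w.1 - 1)/(w.1 + 1) = 2/(w.1 + 1) := by field_simp; ring
    rw [h]
    exact div_ne_zero two_ne_zero ha
  unfold cayley cayleyInv
  refine Prod.ext ?_ (funext fun i => ?_) <;> simp only
  · field_simp
    ring
  · field_simp
    linear_combination (w.2 i) * hsq2

lemma diff_cayley {m : ℕ} : DifferentiableOn ℂ (cayley (m:=m)) (ballB m) := by
  have hden : DifferentiableOn ℂ (fun z : ℂ × (Fin m → ℂ) => (1:ℂ) - z.1) (ballB m) := by
    fun_prop
  have hnum : DifferentiableOn ℂ (fun z : ℂ × (Fin m → ℂ) => (1:ℂ) + z.1) (ballB m) := by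
    fun_prop
  have h1 : DifferentiableOn ℂ (fun z : ℂ × (Fin m → ℂ) => (1 + z.1)/(1 - z.1)) (ballB m) := by
    simp only [div_eq_mul_inv]
    exact hnum.mul (hden.inv fun z hz => ball_ne hz)
  have h2 : DifferentiableOn ℂ
      (fun z : ℂ × (Fin m → ℂ) => fun i => (Real.sqrt 2 : ℂ) * z.2 i / (1 - z.1)) (ballB m) := by
    rw [differentiableOn_pi]
    intro i
    have hnum' : DifferentiableOn ℂ (fun z : ℂ × (Fin m → ℂ) =>
        (Real.sqrt 2 : ℂ) * z.2 i) (ballB m) := by fun_prop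
    simp only [div_eq_mul_inv]
    exact hnum'.mul (hden.inv fun z hz => ball_ne hz)
  exact h1.prodMk h2

lemma diff_cayleyInv {m : ℕ} : DifferentiableOn ℂ (cayleyInv (m:=m)) (SiegelH m) := by
  have hden : DifferentiableOn ℂ (fun w : ℂ × (Fin m → ℂ) => w.1 + 1) (SiegelH m) := by
    fun_prop
  have hnum : DifferentiableOn ℂ (fun w : ℂ × (Fin m → ℂ) => w.1 - 1) (SiegelH m) := by
    fun_prop
  have h1 : DifferentiableOn ℂ (fun w : ℂ × (Fin m → ℂ) => (w.1 - 1)/(w.1 + 1)) (SiegelH m) := by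
    simp only [div_eq_mul_inv]
    exact hnum.mul (hden.inv fun w hw => siegel_ne hw)
  have h2 : DifferentiableOn ℂ
      (fun w : ℂ × (Fin m → ℂ) => fun i => (Real.sqrt 2 : ℂ) * w.2 i / (w.1 + 1)) (SiegelH m) := by
    rw [differentiableOn_pi]
    intro i
    have hnum' : DifferentiableOn ℂ (fun w : ℂ × (Fin m → ℂ) =>
        (Real.sqrt 2 : ℂ) * w.2 i) (SiegelH m) := by fun_prop
    simp only [div_eq_mul_inv]
    exact hnum'.mul (hden.inv fun w hw => siegel_ne hw)
  exact h1.prodMk h2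

lemma hs2ne : (Real.sqrt 2:ℂ) ≠ 0 := by
  intro h
  have := hsq2
  rw [h] at this
  simp at this

lemma jz_inv {m : ℕ} {z : ℂ × (Fin m → ℂ)} (hz : z ∈ ballB m) :
    (jRinv (cayley z))⁻¹ = (Real.sqrt 2:ℂ) / (1 - z.1) := by
  have ha : (1:ℂ) - z.1 ≠ 0 := ball_ne hz
  unfold jRinv cayley
  simp only
  rw [inv_div]
  rw [div_eq_div_iff hs2ne ha]
  field_simp
  linear_combination -hsq2

lemma key_id {m : ℕ} {z w : ℂ × (Fin m → ℂ)} (hz : z ∈ ballB m) (hw : w ∈ ballB m) :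
    DeltaP (cayley z) (cayley w)
      = JTD z w * (jRinv (cayley z))⁻¹ * (starRingEnd ℂ) ((jRinv (cayley w))⁻¹) := by
  have ha : (1:ℂ) - z.1 ≠ 0 := ball_ne hz
  have hb : (1:ℂ) - w.1 ≠ 0 := ball_ne hw
  have hb' : (1:ℂ) - (starRingEnd ℂ) w.1 ≠ 0 := by
    intro h
    apply hb
    have := congrArg (starRingEnd ℂ) h
    simpa using this
  rw [jz_inv hz, jz_inv hw]
  have hconj : (starRingEnd ℂ) ((Real.sqrt 2:ℂ) / (1 - w.1))
      = (Real.sqrt 2:ℂ) / (1 - (starRingEnd ℂ) w.1) := by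
    rw [map_div₀, map_sub, map_one, Complex.conj_ofReal]
  rw [hconj]
  have hsum : (∑ i, (starRingEnd ℂ) ((cayley w).2 i) * (cayley z).2 i)
      = (∑ i, (starRingEnd ℂ) (w.2 i) * z.2 i) * (2 / ((1 - (starRingEnd ℂ) w.1) * (1 - z.1))) := by
    rw [Finset.sum_mul]
    refine Finset.sum_congr rfl fun i _ => ?_
    simp only [cayley, map_div₀, map_mul, map_sub, map_one, Complex.conj_ofReal]
    field_simp
    ring_nf
    linear_combination ((starRingEnd ℂ) (w.2 i) * z.2 i) * hsq2
  simp only [DeltaP, JTD]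
  rw [hsum]
  rw [mul_assoc, div_mul_div_comm, hsq2]
  simp only [cayley, map_div₀, map_add, map_sub, map_one, Complex.conj_ofReal]
  field_simp
  ring

/-- The partial Cayley transform maps the unit ball `B`
biholomorphically onto `H`, and satisfies
`Δ'(Rz, Rw) = Δ(z,w) · j(R⁻¹, Rz)⁻¹ · conj (j(R⁻¹, Rw))⁻¹`. -/
theorem stmt5 (m : ℕ) :
    Set.BijOn (cayley (m := m)) (ballB m) (SiegelH m) ∧
    DifferentiableOn ℂ (cayley (m := m)) (ballB m) ∧
    Set.InvOn (cayleyInv (m := m)) (cayley (m := m)) (ballB m) (SiegelH m) ∧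
    DifferentiableOn ℂ (cayleyInv (m := m)) (SiegelH m) ∧
    ∀ z ∈ ballB m, ∀ w ∈ ballB m,
      DeltaP (cayley z) (cayley w) =
        JTD z w * (jRinv (cayley z))⁻¹ *
          (starRingEnd ℂ) ((jRinv (cayley w))⁻¹) := by
  refine ⟨⟨mapsTo_cayley, Set.LeftInvOn.injOn (fun z hz => left_inv' hz), ?_⟩,
    diff_cayley, ⟨fun z hz => left_inv' hz, fun w hw => right_inv' hw⟩,
    diff_cayleyInv, fun z hz w hw => key_id hz hw⟩
  intro w hw
  exact ⟨cayleyInv w, mapsTo_cayleyInv hw, right_inv' hw⟩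
end
end

section
/- For k + ρ ≥ 1 and m ∈ R, the integral ∫_{-∞}^{∞} e^{2πimt}/(cosh t - v·sinh t)^{k+ρ} dt, for v ∈ C with |v| < 1, equals (up to a nonzero constant depending only on k+ρ and m) (1 - v²)^{-(k+ρ)/2} · ((1+v)/(1-v))^{πim}. -/
/-!
For real `x ∈ (-1, 1)` one has `cosh t - x sinh t = √(1 - x²) cosh (t - artanh x)`, so
translating `t` by `artanh x` shows that the integral at `v = x` is its value at `v = 0` times
`(1 - x²)^(-n/2) e^(2πim artanh x)`, which is the closed form. Both sides are holomorphic on the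
unit disc (differentiate under the integral sign, dominating by `sech t`), so the identity theorem
extends the equality from `(-1, 1)` to the disc. The constant `∫ e^(2πimt) sech^n t dt` is
nonzero: the substitution `y = e^t / (2 cosh t)` turns it into `2^(n-1) B(n/2 + πim, n/2 - πim)`,
and `Γ` has no zeros.
-/

open Complex Real MeasureTheory Filter Topology Metric Set

noncomputable section

lemma Real.one_add_sq_div_two_le_cosh (t : ℝ) : 1 + t ^ 2 / 2 ≤ Real.cosh t := by
  have hsinh : (t / 2) ^ 2 ≤ Real.sinh (t / 2) ^ 2 := by
    rw [← sq_abs (t / 2), ← sq_abs (Real.sinh _), Real.abs_sinh]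
    exact pow_le_pow_left₀ (abs_nonneg _) (Real.self_le_sinh_iff.2 (abs_nonneg _)) 2
  have hcosh := Real.cosh_two_mul (t / 2)
  rw [mul_div_cancel₀ t two_ne_zero, Real.cosh_sq'] at hcosh
  linarith

lemma Real.integrable_inv_cosh : Integrable fun t : ℝ => (Real.cosh t)⁻¹ := by
  refine (integrable_inv_one_add_sq.const_mul 2).mono' (by fun_prop) ?_
  filter_upwards with t
  have hpos : 0 < (1 + t ^ 2) / 2 := by positivity
  rw [norm_inv, Real.norm_of_nonneg (Real.cosh_pos t).le, ← div_eq_mul_inv, ← inv_div]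
  exact inv_anti₀ hpos (by linarith [Real.one_add_sq_div_two_le_cosh t])

lemma Real.inv_cosh_pow_le_inv_cosh {n : ℕ} (hn : n ≠ 0) (t : ℝ) :
    (Real.cosh t)⁻¹ ^ n ≤ (Real.cosh t)⁻¹ :=
  pow_le_of_le_one (inv_nonneg.2 (Real.cosh_pos t).le)
    (inv_le_one_of_one_le₀ (Real.one_le_cosh t)) hn

lemma Real.abs_sinh_le_cosh (t : ℝ) : |Real.sinh t| ≤ Real.cosh t := by
  rw [Real.abs_sinh, ← Real.cosh_abs]
  exact (Real.sinh_lt_cosh _).le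

lemma norm_cexp_two_pi_I_mul (m t : ℝ) : ‖cexp (2 * π * I * m * t)‖ = 1 := by
  rw [show (2 * π * I * m * t : ℂ) = ((2 * π * m * t : ℝ) : ℂ) * I by push_cast; ring]
  exact Complex.norm_exp_ofReal_mul_I _

section Denominator

variable {v : ℂ} {r : ℝ}

lemma one_sub_mul_cosh_le_norm_cosh_sub_mul_sinh (hv : ‖v‖ ≤ r) (t : ℝ) :
    (1 - r) * Real.cosh t ≤ ‖Complex.cosh t - v * Complex.sinh t‖ := by
  have hsinh : ‖v * Complex.sinh t‖ ≤ r * Real.cosh t := by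
    rw [norm_mul, ← Complex.ofReal_sinh, Complex.norm_real, Real.norm_eq_abs]
    exact mul_le_mul hv (Real.abs_sinh_le_cosh t) (abs_nonneg _) ((norm_nonneg v).trans hv)
  have hcosh : ‖Complex.cosh t‖ = Real.cosh t := by
    rw [← Complex.ofReal_cosh, Complex.norm_real, Real.norm_of_nonneg (Real.cosh_pos t).le]
  have := norm_sub_norm_le (Complex.cosh t) (v * Complex.sinh t)
  linarith

lemma cosh_sub_mul_sinh_ne_zero (hv : ‖v‖ < 1) (t : ℝ) :
    Complex.cosh t - v * Complex.sinh t ≠ 0 :=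
  norm_pos_iff.1 <| (mul_pos (sub_pos.2 hv) (Real.cosh_pos t)).trans_le
    (one_sub_mul_cosh_le_norm_cosh_sub_mul_sinh le_rfl t)

lemma norm_inv_cosh_sub_mul_sinh_pow_le (hv : ‖v‖ ≤ r) (hr : r < 1) (t : ℝ) (n : ℕ) :
    ‖(Complex.cosh t - v * Complex.sinh t)⁻¹ ^ n‖ ≤
      ((1 - r)⁻¹ * (Real.cosh t)⁻¹) ^ n := by
  rw [norm_pow, norm_inv, ← mul_inv]
  exact pow_le_pow_left₀ (by positivity) (inv_anti₀ (mul_pos (sub_pos.2 hr) (Real.cosh_pos t))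
    (one_sub_mul_cosh_le_norm_cosh_sub_mul_sinh hv t)) n

lemma norm_inv_cosh_sub_mul_sinh_pow_le_inv_cosh {n : ℕ} (hv : ‖v‖ ≤ r) (hr : r < 1)
    (hn : n ≠ 0) (t : ℝ) :
    ‖(Complex.cosh t - v * Complex.sinh t)⁻¹ ^ n‖ ≤
      (1 - r)⁻¹ ^ n * (Real.cosh t)⁻¹ :=
  calc _ ≤ ((1 - r)⁻¹ * (Real.cosh t)⁻¹) ^ n := norm_inv_cosh_sub_mul_sinh_pow_le hv hr t n
    _ ≤ (1 - r)⁻¹ ^ n * (Real.cosh t)⁻¹ := by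
      rw [mul_pow]
      gcongr
      exact Real.inv_cosh_pow_le_inv_cosh hn t

lemma norm_sinh_mul_inv_cosh_sub_mul_sinh_pow_succ_le {n : ℕ} (hv : ‖v‖ ≤ r) (hr : r < 1)
    (hn : n ≠ 0) (t : ℝ) :
    ‖Complex.sinh t * (Complex.cosh t - v * Complex.sinh t)⁻¹ ^ (n + 1)‖ ≤
      (1 - r)⁻¹ ^ (n + 1) * (Real.cosh t)⁻¹ := by
  have hsinh : ‖Complex.sinh t‖ ≤ Real.cosh t := by
    rw [← Complex.ofReal_sinh, Complex.norm_real, Real.norm_eq_abs]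
    exact Real.abs_sinh_le_cosh t
  have hc : Real.cosh t * (Real.cosh t)⁻¹ = 1 := mul_inv_cancel₀ (Real.cosh_pos t).ne'
  rw [norm_mul]
  calc _ ≤ Real.cosh t * ((1 - r)⁻¹ * (Real.cosh t)⁻¹) ^ (n + 1) := by
        gcongr
        exact norm_inv_cosh_sub_mul_sinh_pow_le hv hr t (n + 1)
    _ = (1 - r)⁻¹ ^ (n + 1) * (Real.cosh t)⁻¹ ^ n := by
        rw [mul_pow, pow_succ (Real.cosh t)⁻¹]
        linear_combination (1 - r)⁻¹ ^ (n + 1) * (Real.cosh t)⁻¹ ^ n * hc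
    _ ≤ (1 - r)⁻¹ ^ (n + 1) * (Real.cosh t)⁻¹ := by
        gcongr
        exact Real.inv_cosh_pow_le_inv_cosh hn t

lemma hasDerivAt_inv_cosh_sub_mul_sinh_pow (hv : ‖v‖ < 1) (t : ℝ) (n : ℕ) :
    HasDerivAt (fun w : ℂ => (Complex.cosh t - w * Complex.sinh t)⁻¹ ^ n)
      (n * (Complex.sinh t * (Complex.cosh t - v * Complex.sinh t)⁻¹ ^ (n + 1))) v := by
  have hD : HasDerivAt (fun w : ℂ => Complex.cosh t - w * Complex.sinh t)
      (-Complex.sinh t) v := by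
    simpa using ((hasDerivAt_id v).mul_const (Complex.sinh t)).const_sub (Complex.cosh t)
  have hne := cosh_sub_mul_sinh_ne_zero hv t
  refine ((hD.fun_inv hne).fun_pow n).congr_deriv ?_
  rcases n with _ | n
  · simp
  · generalize Complex.cosh t - v * Complex.sinh t = D
    simp only [Nat.add_sub_cancel, neg_neg]
    ring

end Denominator

def twistedCoshIntegral (n : ℕ) (m : ℝ) (v : ℂ) : ℂ :=
  ∫ t : ℝ, cexp (2 * π * I * m * t) / (Complex.cosh t - v * Complex.sinh t) ^ n

lemma differentiableOn_twistedCoshIntegral {n : ℕ} (hn : n ≠ 0) (m : ℝ) :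
    DifferentiableOn ℂ (twistedCoshIntegral n m) (ball 0 1) := by
  intro v₀ hv₀
  rw [mem_ball_zero_iff] at hv₀
  obtain ⟨r, hv₀r, hr⟩ := exists_between hv₀
  have hball : ∀ v ∈ ball v₀ (r - ‖v₀‖), ‖v‖ ≤ r := fun v hv => by
    rw [mem_ball_iff_norm] at hv
    linarith [norm_le_norm_add_norm_sub' v v₀]
  set D : ℂ → ℝ → ℂ := fun v t => Complex.cosh t - v * Complex.sinh t
  set F : ℂ → ℝ → ℂ := fun v t => cexp (2 * π * I * m * t) * (D v t)⁻¹ ^ n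
  set F' : ℂ → ℝ → ℂ := fun v t =>
    cexp (2 * π * I * m * t) * (n * (Complex.sinh t * (D v t)⁻¹ ^ (n + 1)))
  have hF : twistedCoshIntegral n m = fun v => ∫ t, F v t := by
    ext v
    simp only [twistedCoshIntegral, F, D, div_eq_mul_inv, inv_pow]
  have hF_meas : ∀ v, AEStronglyMeasurable (F v) := fun v => by
    simp only [F, D]
    fun_prop
  have hF'_meas : AEStronglyMeasurable (F' v₀) := by
    simp only [F', D]
    fun_prop
  have hF_int : Integrable (F v₀) :=
    (Real.integrable_inv_cosh.const_mul _).mono' (hF_meas v₀) <| Eventually.of_forall fun t => by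
      rw [norm_mul, norm_cexp_two_pi_I_mul, one_mul]
      exact norm_inv_cosh_sub_mul_sinh_pow_le_inv_cosh hv₀r.le hr hn t
  have hF'_bound : ∀ t, ∀ v ∈ ball v₀ (r - ‖v₀‖),
      ‖F' v t‖ ≤ n * ((1 - r)⁻¹ ^ (n + 1) * (Real.cosh t)⁻¹) := fun t v hv => by
    rw [norm_mul, norm_cexp_two_pi_I_mul, one_mul, norm_mul, Complex.norm_natCast]
    gcongr
    exact norm_sinh_mul_inv_cosh_sub_mul_sinh_pow_succ_le (hball v hv) hr hn t
  have hderiv := hasDerivAt_integral_of_dominated_loc_of_deriv_le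
    (ball_mem_nhds v₀ (sub_pos.2 hv₀r)) (Eventually.of_forall hF_meas) hF_int hF'_meas
    (Eventually.of_forall hF'_bound) ((Real.integrable_inv_cosh.const_mul _).const_mul _)
    (Eventually.of_forall fun t v hv => (hasDerivAt_inv_cosh_sub_mul_sinh_pow
      ((hball v hv).trans_lt hr) t n).const_mul _)
  rw [hF]
  exact hderiv.2.differentiableAt.differentiableWithinAt

def coshIntegralClosedForm (n : ℕ) (m : ℝ) (v : ℂ) : ℂ :=
  (1 - v ^ 2) ^ (-((n : ℂ) / 2)) * ((1 + v) / (1 - v)) ^ ((π : ℂ) * I * m)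

lemma Complex.re_one_sub_sq_pos {v : ℂ} (hv : ‖v‖ < 1) : 0 < (1 - v ^ 2).re := by
  have : (v ^ 2).re ≤ ‖v‖ ^ 2 := (Complex.re_le_norm _).trans (norm_pow v 2).le
  rw [sub_re, one_re]
  nlinarith [norm_nonneg v]

lemma Complex.re_one_add_div_one_sub_pos {v : ℂ} (hv : ‖v‖ < 1) :
    0 < ((1 + v) / (1 - v)).re := by
  have hv' : 1 - v ≠ 0 := sub_ne_zero.2 fun h => by simp [← h] at hv
  have hre : ((1 + v) / (1 - v)).re = (1 - normSq v) / normSq (1 - v) := by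
    rw [div_re, ← add_div]
    congr 1
    simp only [normSq_apply, add_re, sub_re, one_re, add_im, sub_im, one_im]
    ring
  rw [hre, normSq_eq_norm_sq]
  exact div_pos (by nlinarith [norm_nonneg v]) (normSq_pos.2 hv')

lemma differentiableOn_coshIntegralClosedForm (n : ℕ) (m : ℝ) :
    DifferentiableOn ℂ (coshIntegralClosedForm n m) (ball 0 1) := by
  intro v hv
  rw [mem_ball_zero_iff] at hv
  have hv' : 1 - v ≠ 0 := sub_ne_zero.2 fun h => by simp [← h] at hv
  refine DifferentiableAt.differentiableWithinAt (DifferentiableAt.mul ?_ ?_)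
  · exact (by fun_prop : DifferentiableAt ℂ (fun v : ℂ => 1 - v ^ 2) v).cpow_const
      (Or.inl (Complex.re_one_sub_sq_pos hv))
  · exact (((differentiableAt_const _).add differentiableAt_id).div
      ((differentiableAt_const _).sub differentiableAt_id) hv').cpow_const
      (Or.inl (Complex.re_one_add_div_one_sub_pos hv))

lemma Real.cosh_sub_mul_sinh_eq {x : ℝ} (hx : x ∈ Ioo (-1) 1) (t : ℝ) :
    Real.cosh t - x * Real.sinh t = √(1 - x ^ 2) * Real.cosh (t - Real.artanh x) := by
  have hs : 0 < √(1 - x ^ 2) := Real.sqrt_pos.2 (by nlinarith [hx.1, hx.2])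
  rw [Real.cosh_sub, Real.cosh_artanh hx, Real.sinh_artanh hx]
  field_simp

lemma twistedCoshIntegral_ofReal {n : ℕ} (m : ℝ) {x : ℝ} (hx : x ∈ Ioo (-1) 1) :
    twistedCoshIntegral n m x =
      cexp (2 * π * I * m * Real.artanh x) / (√(1 - x ^ 2) : ℂ) ^ n *
        twistedCoshIntegral n m 0 := by
  set a := Real.artanh x
  set e : ℝ → ℂ := fun t => cexp (2 * π * I * m * t) / (Real.cosh t : ℂ) ^ n
  have hshift : ∀ t : ℝ,
      cexp (2 * π * I * m * t) / (Complex.cosh t - x * Complex.sinh t) ^ n =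
        cexp (2 * π * I * m * a) / (√(1 - x ^ 2) : ℂ) ^ n * e (t - a) := by
    intro t
    have hD : Complex.cosh t - x * Complex.sinh t = (√(1 - x ^ 2) : ℂ) * Real.cosh (t - a) := by
      rw [← Complex.ofReal_cosh, ← Complex.ofReal_sinh]
      exact_mod_cast Real.cosh_sub_mul_sinh_eq hx t
    have hexp : cexp (2 * π * I * m * t) =
        cexp (2 * π * I * m * a) * cexp (2 * π * I * m * ↑(t - a)) := by
      rw [← Complex.exp_add]
      push_cast
      ring_nf
    simp only [e, hD, hexp, mul_pow]
    ring
  have hzero : twistedCoshIntegral n m 0 = ∫ t, e t := by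
    simp [twistedCoshIntegral, e, Complex.ofReal_cosh]
  rw [hzero, twistedCoshIntegral, integral_congr_ae (Eventually.of_forall hshift),
    integral_const_mul, integral_sub_right_eq_self e a]

lemma coshIntegralClosedForm_ofReal (n : ℕ) (m : ℝ) {x : ℝ} (hx : x ∈ Ioo (-1) 1) :
    coshIntegralClosedForm n m x =
      cexp (2 * π * I * m * Real.artanh x) / (√(1 - x ^ 2) : ℂ) ^ n := by
  have h1 : 0 < 1 - x ^ 2 := by nlinarith [hx.1, hx.2]
  have h2 : 0 < (1 + x) / (1 - x) := div_pos (by linarith [hx.1]) (by linarith [hx.2])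
  have hsqrt : (√(1 - x ^ 2) : ℂ) ^ n = cexp (Real.log (1 - x ^ 2) * ((n : ℂ) / 2)) := by
    rw [← Real.exp_log (Real.sqrt_pos.2 h1), Real.log_sqrt h1.le, Complex.ofReal_exp,
      ← Complex.exp_nat_mul]
    push_cast
    ring_nf
  rw [coshIntegralClosedForm, hsqrt, ← Complex.exp_sub,
    show (1 : ℂ) - x ^ 2 = ((1 - x ^ 2 : ℝ) : ℂ) by push_cast; ring,
    show (1 + x : ℂ) / (1 - x) = (((1 + x) / (1 - x) : ℝ) : ℂ) by push_cast; ring,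
    Complex.cpow_def_of_ne_zero (by exact_mod_cast h1.ne'),
    Complex.cpow_def_of_ne_zero (by exact_mod_cast h2.ne'),
    ← Complex.ofReal_log h1.le, ← Complex.ofReal_log h2.le,
    Real.artanh_eq_half_log (Ioo_subset_Icc_self hx), ← Complex.exp_add]
  push_cast
  ring_nf

lemma AnalyticOnNhd.eqOn_ball_of_eq_ofReal {f g : ℂ → ℂ} {r : ℝ} (hr : 0 < r)
    (hf : AnalyticOnNhd ℂ f (ball 0 r)) (hg : AnalyticOnNhd ℂ g (ball 0 r))
    (hfg : ∀ x ∈ Ioo (-r) r, f x = g x) : EqOn f g (ball 0 r) := by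
  refine hf.eqOn_of_preconnected_of_frequently_eq hg (convex_ball 0 r).isPreconnected
    (mem_ball_self hr) ?_
  have hreal : Tendsto ((↑) : ℝ → ℂ) (𝓝[≠] 0) (𝓝[≠] 0) :=
    tendsto_nhdsWithin_iff.2 ⟨Complex.ofReal_zero ▸
      Complex.continuous_ofReal.continuousAt.tendsto.mono_left nhdsWithin_le_nhds,
      eventually_nhdsWithin_of_forall fun x hx => Complex.ofReal_ne_zero.2 hx⟩
  refine hreal.frequently (Eventually.frequently ?_)
  filter_upwards [nhdsWithin_le_nhds (Ioo_mem_nhds (neg_neg_of_pos hr) hr)] with x hx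
  exact hfg x hx

lemma twistedCoshIntegral_eq_mul_closedForm {n : ℕ} (hn : n ≠ 0) (m : ℝ) {v : ℂ}
    (hv : v ∈ ball 0 1) :
    twistedCoshIntegral n m v = twistedCoshIntegral n m 0 * coshIntegralClosedForm n m v := by
  refine AnalyticOnNhd.eqOn_ball_of_eq_ofReal one_pos
    ((differentiableOn_twistedCoshIntegral hn m).analyticOnNhd isOpen_ball)
    (fun w hw => analyticAt_const.fun_mul
      ((differentiableOn_coshIntegralClosedForm n m).analyticOnNhd isOpen_ball w hw))
    (fun x hx => ?_) hv
  rw [twistedCoshIntegral_ofReal m hx, coshIntegralClosedForm_ofReal n m hx, mul_comm]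

lemma Complex.ofReal_exp_cpow (u : ℝ) (w : ℂ) : (Real.exp u : ℂ) ^ w = cexp (u * w) := by
  rw [Complex.cpow_def_of_ne_zero (by exact_mod_cast (Real.exp_pos u).ne'),
    ← Complex.ofReal_log (Real.exp_pos u).le, Real.log_exp]

lemma Real.exp_div_two_cosh_eq (t : ℝ) :
    Real.exp t / (2 * Real.cosh t) = 2⁻¹ * Real.tanh t + 2⁻¹ := by
  have hc := (Real.cosh_pos t).ne'
  rw [Real.tanh_eq_sinh_div_cosh, ← Real.cosh_add_sinh]
  field_simp
  ring

lemma Real.image_exp_div_two_cosh :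
    (fun t => Real.exp t / (2 * Real.cosh t)) '' univ = Ioo 0 1 := by
  simp_rw [Real.exp_div_two_cosh_eq]
  rw [← image_image (2⁻¹ * · + 2⁻¹), Real.tanh_bijOn.image_eq,
    image_affine_Ioo (by norm_num)]
  norm_num

lemma Real.injective_exp_div_two_cosh :
    Function.Injective fun t => Real.exp t / (2 * Real.cosh t) := by
  simp_rw [Real.exp_div_two_cosh_eq]
  intro s t hst
  exact Real.tanh_injective (by simpa using hst)

lemma Real.hasDerivAt_exp_div_two_cosh (t : ℝ) :
    HasDerivAt (fun s => Real.exp s / (2 * Real.cosh s)) (2 / (2 * Real.cosh t) ^ 2) t := by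
  have hc : 2 * Real.cosh t ≠ 0 := by positivity
  have hexp : Real.exp t * (Real.cosh t - Real.sinh t) = 1 := by
    rw [Real.cosh_sub_sinh, ← Real.exp_add, add_neg_cancel, Real.exp_zero]
  refine ((Real.hasDerivAt_exp t).div ((Real.hasDerivAt_cosh t).const_mul 2) hc).congr_deriv ?_
  field_simp
  linear_combination hexp

lemma Complex.betaIntegral_eq_integral_cosh (a b : ℂ) :
    betaIntegral a b = 2 * ∫ t : ℝ, cexp ((a - b) * t) / (2 * Real.cosh t : ℂ) ^ (a + b) := by
  have hchg := integral_image_eq_integral_abs_deriv_smul MeasurableSet.univ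
    (fun t _ => (Real.hasDerivAt_exp_div_two_cosh t).hasDerivWithinAt)
    Real.injective_exp_div_two_cosh.injOn fun y : ℝ => (y : ℂ) ^ (a - 1) * (1 - y) ^ (b - 1)
  rw [Real.image_exp_div_two_cosh, Measure.restrict_univ] at hchg
  rw [betaIntegral, intervalIntegral.integral_of_le zero_le_one, integral_Ioc_eq_integral_Ioo,
    hchg, ← integral_const_mul]
  refine integral_congr_ae (Eventually.of_forall fun t => ?_)
  have hC : 0 < 2 * Real.cosh t := by positivity
  set L := Real.log (2 * Real.cosh t)
  have hL : Real.exp L = 2 * Real.cosh t := Real.exp_log hC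
  have hφ : Real.exp t / (2 * Real.cosh t) = Real.exp (t - L) := by rw [Real.exp_sub, hL]
  have hφ' : 1 - Real.exp t / (2 * Real.cosh t) = Real.exp (-t - L) := by
    rw [Real.exp_sub, hL, ← Real.cosh_sub_sinh, ← Real.cosh_add_sinh]
    field_simp
    ring
  have hderiv : |2 / (2 * Real.cosh t) ^ 2| = 2 * Real.exp (-2 * L) := by
    rw [abs_of_pos (by positivity), show -2 * L = -(L + L) by ring, Real.exp_neg, Real.exp_add,
      hL]
    ring
  have hpow : (2 * (Real.cosh t : ℂ)) ^ (a + b) = cexp (L * (a + b)) := by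
    rw [← Complex.ofReal_exp_cpow, hL]
    push_cast
    rfl
  simp only
  rw [hderiv, Complex.real_smul, ← Complex.ofReal_one, ← Complex.ofReal_sub, hφ', hφ,
    Complex.ofReal_exp_cpow, Complex.ofReal_exp_cpow, Complex.ofReal_mul, Complex.ofReal_exp, hpow,
    div_eq_mul_inv, ← Complex.exp_neg, mul_assoc, ← Complex.exp_add, ← Complex.exp_add,
    ← Complex.exp_add]
  congr 2
  push_cast
  ring

lemma betaIntegral_eq_twistedCoshIntegral_zero (n : ℕ) (m : ℝ) :
    betaIntegral (n / 2 + π * m * I) (n / 2 - π * m * I) =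
      2 / 2 ^ n * twistedCoshIntegral n m 0 := by
  rw [Complex.betaIntegral_eq_integral_cosh, twistedCoshIntegral, div_mul_eq_mul_div,
    mul_div_assoc, ← integral_div]
  congr 1
  refine integral_congr_ae (Eventually.of_forall fun t => ?_)
  simp only
  rw [show (n / 2 + π * m * I : ℂ) + (n / 2 - π * m * I) = (n : ℂ) by ring,
    Complex.cpow_natCast, zero_mul, sub_zero, ← Complex.ofReal_cosh, mul_pow, div_div,
    mul_comm ((2 : ℂ) ^ n)]
  congr 2
  ring

lemma twistedCoshIntegral_zero_ne_zero {n : ℕ} (hn : n ≠ 0) (m : ℝ) :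
    twistedCoshIntegral n m 0 ≠ 0 := by
  have ha : 0 < (n / 2 + π * m * I : ℂ).re := by simpa using Nat.pos_of_ne_zero hn
  have hb : 0 < (n / 2 - π * m * I : ℂ).re := by simpa using Nat.pos_of_ne_zero hn
  have hB := Complex.Gamma_mul_Gamma_eq_betaIntegral ha hb
  rw [betaIntegral_eq_twistedCoshIntegral_zero] at hB
  intro h0
  rw [h0, mul_zero, mul_zero] at hB
  exact mul_ne_zero (Complex.Gamma_ne_zero_of_re_pos ha) (Complex.Gamma_ne_zero_of_re_pos hb) hB

/-- For `k + ρ ≥ 1` and `m ∈ ℝ`, the integral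
`∫_{-∞}^{∞} e^{2πimt}/(cosh t - v sinh t)^{k+ρ} dt`, for `v ∈ ℂ` with `|v| < 1`,
equals, up to a nonzero constant depending only on `k + ρ` and `m`,
`(1 - v²)^{-(k+ρ)/2} ((1+v)/(1-v))^{πim}` (principal branches). -/
theorem stmt16 (k ρ : ℕ) (h : 1 ≤ k + ρ) (m : ℝ) :
    ∃ c : ℂ, c ≠ 0 ∧ ∀ v : ℂ, ‖v‖ < 1 →
      (∫ t : ℝ, Complex.exp (2 * π * Complex.I * m * t) /
          (Complex.cosh t - v * Complex.sinh t) ^ (k + ρ)) =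
        c * (1 - v ^ 2) ^ (-(((k + ρ : ℕ) : ℂ) / 2)) *
          ((1 + v) / (1 - v)) ^ ((π : ℂ) * Complex.I * m) := by
  have hn : k + ρ ≠ 0 := by omega
  refine ⟨twistedCoshIntegral (k + ρ) m 0, twistedCoshIntegral_zero_ne_zero hn m,
    fun v hv => ?_⟩
  exact (twistedCoshIntegral_eq_mul_closedForm hn m (mem_ball_zero_iff.2 hv)).trans
    (mul_assoc _ _ _).symm
end
end
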